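/- Let f : X ⟶ Y be a simplicial map, let x be an n-simplex of X, and write f(x) = Y.map σ.op y where y is a non-degenerate m-simplex of Y and σ : [n] ⟶ [m] is an epimorphism of the simplex category (the Eilenberg–Zilber decomposition of f(x)). Then for all i, j ∈ Fin (n+1): if the equivalence relation Rₓ generated by ≈ₓ relates i and j, then the equivalence relation R_y generated by ≈_y relates σ i and σ j. -/

import Mathlib

open CategoryTheory CategoryTheory.Limits Simplicial SSet

/-- The `i`-th vertex of an `n`-simplex `x`, i.e. `x · εᵢ`, where `εᵢ : ⦋0⦌ ⟶ ⦋n⦌`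
sends `0` to `i`. -/
def SSet.vertex (X : SSet) {n : ℕ} (x : X _⦋n⦌) (i : Fin (n + 1)) : X _⦋0⦌ :=
  X.map (SimplexCategory.const ⦋0⦌ ⦋n⦌ i).op x

/-- A simplex is degenerate if it is obtained from a simplex of strictly lower degree
by the action of a (necessarily non-identity) epimorphism of the simplex category. -/
def SSet.IsDegenerate (X : SSet) {n : ℕ} (x : X _⦋n⦌) : Prop :=
  ∃ (m : ℕ) (_ : m < n) (σ : (⦋n⦌ : SimplexCategory) ⟶ ⦋m⦌) (y : X _⦋m⦌),
    Epi σ ∧ x = X.map σ.op y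

/-- A simplicial set is non-singular if the representing map of each of its
non-degenerate simplices is a monomorphism. -/
def SSet.NonSingular (X : SSet) : Prop :=
  ∀ (n : ℕ) (x : X _⦋n⦌), ¬ X.IsDegenerate x → Mono ((SSet.yonedaEquiv (X := X) (n := ⦋n⦌)).symm x)

/-- The relation `≈ₓ` on `Fin (n + 1)`: `i ≈ₓ k` iff there exists `j` with
`i ≤ k`, `k ≤ j` and `x·εᵢ = x·εⱼ`. -/
def SSet.approxRel (X : SSet) {n : ℕ} (x : X _⦋n⦌) (i k : Fin (n + 1)) : Prop :=
  ∃ j, i ≤ k ∧ k ≤ j ∧ X.vertex x i = X.vertex x j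

/-- The equivalence relation `Rₓ` generated by `≈ₓ`. -/
def SSet.vertexRel (X : SSet) {n : ℕ} (x : X _⦋n⦌) : Fin (n + 1) → Fin (n + 1) → Prop :=
  Relation.EqvGen (X.approxRel x)

namespace SSet

variable {X Y : SSet} {n m : ℕ}

lemma vertex_app (f : X ⟶ Y) (x : X _⦋n⦌) (i : Fin (n + 1)) :
    Y.vertex (f.app _ x) i = f.app _ (X.vertex x i) :=
  (NatTrans.naturality_apply f _ x).symm

lemma vertex_map (σ : (⦋n⦌ : SimplexCategory) ⟶ ⦋m⦌) (y : X _⦋m⦌) (i : Fin (n + 1)) :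
    X.vertex (X.map σ.op y) i = X.vertex y (σ.toOrderHom i) := by
  rw [vertex, vertex, ← Functor.map_comp_apply, ← op_comp, SimplexCategory.const_comp]

lemma approxRel.app (f : X ⟶ Y) {x : X _⦋n⦌} {i k : Fin (n + 1)} (h : X.approxRel x i k) :
    Y.approxRel (f.app _ x) i k := by
  obtain ⟨j, hik, hkj, hv⟩ := h
  exact ⟨j, hik, hkj, by rw [vertex_app, vertex_app, hv]⟩

lemma approxRel.map (σ : (⦋n⦌ : SimplexCategory) ⟶ ⦋m⦌) {y : X _⦋m⦌} {i k : Fin (n + 1)}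
    (h : X.approxRel (X.map σ.op y) i k) :
    X.approxRel y (σ.toOrderHom i) (σ.toOrderHom k) := by
  obtain ⟨j, hik, hkj, hv⟩ := h
  refine ⟨σ.toOrderHom j, σ.toOrderHom.monotone hik, σ.toOrderHom.monotone hkj, ?_⟩
  rwa [vertex_map, vertex_map] at hv

lemma vertexRel.app (f : X ⟶ Y) {x : X _⦋n⦌} {i k : Fin (n + 1)} (h : X.vertexRel x i k) :
    Y.vertexRel (f.app _ x) i k :=
  Relation.EqvGen.mono (fun _ _ ↦ approxRel.app f) _ _ h

lemma vertexRel.map (σ : (⦋n⦌ : SimplexCategory) ⟶ ⦋m⦌) {y : X _⦋m⦌} {i k : Fin (n + 1)}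
    (h : X.vertexRel (X.map σ.op y) i k) :
    X.vertexRel y (σ.toOrderHom i) (σ.toOrderHom k) :=
  Quot.eqvGen_exact <| congrArg (Quot.map σ.toOrderHom fun _ _ ↦ approxRel.map σ)
    (Quot.eqvGen_sound h)

end SSet

theorem vertexRel_map_general {X Y : SSet} (f : X ⟶ Y) {n m : ℕ} (x : X _⦋n⦌)
    (σ : (⦋n⦌ : SimplexCategory) ⟶ ⦋m⦌) (y : Y _⦋m⦌)
    (hfx : f.app (Opposite.op ⦋n⦌) x = Y.map σ.op y)
    (i j : Fin (n + 1)) (hij : X.vertexRel x i j) :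
    Y.vertexRel y (σ.toOrderHom i) (σ.toOrderHom j) :=
  SSet.vertexRel.map σ (hfx ▸ hij.app f)

/-- If `f(x) = Y.map σ.op y` is the Eilenberg–Zilber decomposition of `f(x)`, then
`σ` carries the equivalence relation `Rₓ` into `R_y`. -/
theorem vertexRel_map {X Y : SSet} (f : X ⟶ Y) {n m : ℕ} (x : X _⦋n⦌)
    (σ : (⦋n⦌ : SimplexCategory) ⟶ ⦋m⦌) (y : Y _⦋m⦌) (hσ : Epi σ)
    (hy : ¬ Y.IsDegenerate y) (hfx : f.app (Opposite.op ⦋n⦌) x = Y.map σ.op y)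
    (i j : Fin (n + 1)) (hij : X.vertexRel x i j) :
    Y.vertexRel y (σ.toOrderHom i) (σ.toOrderHom j) :=
  vertexRel_map_general f x σ y hfx i j hij
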